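/- arXiv:1004.5498 — 5 statements merged into one kernel-verified Lean document; each statement's English description precedes it below -/
import Mathlib

section
/- Let M be a monoid with finite generating set S and word semimetric d_S. Left translation by every element of M is an isometric embedding of (M, d_S) into itself if and only if M is left cancellative. -/
open scoped ENNReal NNReal

def IsSemimetric {X : Type*} (d : X → X → ℝ≥0∞) : Prop :=
  (∀ x y, d x y = 0 ↔ x = y) ∧ ∀ x y z, d x z ≤ d x y + d y z

noncomputable def wordDist {M : Type*} [Monoid M] (S : Set M) (x y : M) : ℝ≥0∞ :=
  sInf {n : ℝ≥0∞ | ∃ w : List M, (∀ s ∈ w, s ∈ S) ∧ x * w.prod = y ∧ n = w.length}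

noncomputable def setDist {X : Type*} (d : X → X → ℝ≥0∞) (A B : Set X) : ℝ≥0∞ :=
  ⨅ a ∈ A, ⨅ b ∈ B, d a b

/-!
A word `w` over `S` with `x * w.prod = y` also satisfies `m * x * w.prod = m * y`, and the converse
holds exactly when `m` is left regular, so such an `m` preserves `d_S`. Conversely `d_S` separates
points, so if left translation by `m` preserves `d_S` it is injective.
-/

section WordDist

variable {M : Type*} [Monoid M] (S : Set M)

theorem wordDist_self (x : M) : wordDist S x x = 0 :=
  nonpos_iff_eq_zero.mp <| sInf_le ⟨[], by simp⟩

theorem one_le_wordDist {x y : M} (hxy : x ≠ y) : 1 ≤ wordDist S x y := by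
  refine le_sInf ?_
  rintro n ⟨w, -, hprod, rfl⟩
  cases w with
  | nil => exact absurd (by simpa using hprod) hxy
  | cons a l => simp

theorem wordDist_eq_zero_iff {x y : M} : wordDist S x y = 0 ↔ x = y := by
  refine ⟨fun h => ?_, fun h => h ▸ wordDist_self S x⟩
  by_contra hxy
  simpa [h] using one_le_wordDist S hxy

theorem wordDist_mul_left_of_isLeftRegular {m : M} (hm : IsLeftRegular m) (x y : M) :
    wordDist S (m * x) (m * y) = wordDist S x y := by
  unfold wordDist
  congr 1
  ext n
  refine exists_congr fun w => and_congr_right fun _ => and_congr_left fun _ => ?_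
  rw [mul_assoc]
  exact hm.eq_iff

theorem isLeftRegular_iff_forall_wordDist_mul_left (m : M) :
    IsLeftRegular m ↔ ∀ x y : M, wordDist S (m * x) (m * y) = wordDist S x y := by
  refine ⟨wordDist_mul_left_of_isLeftRegular S, fun h x y hxy => ?_⟩
  rw [← wordDist_eq_zero_iff S, ← h, show m * x = m * y from hxy, wordDist_self]

end WordDist

theorem stmt_4_general {M : Type*} [Monoid M] (S : Set M) :
    (∀ m x y : M, wordDist S (m * x) (m * y) = wordDist S x y) ↔
    (∀ m x y : M, m * x = m * y → x = y) :=
  (forall_congr' (isLeftRegular_iff_forall_wordDist_mul_left S)).symm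

theorem stmt_4 {M : Type*} [Monoid M] (S : Set M) (hS : S.Finite)
    (hgen : Submonoid.closure S = ⊤) :
    (∀ m x y : M, wordDist S (m * x) (m * y) = wordDist S x y) ↔
    (∀ m x y : M, m * x = m * y → x = y) :=
  stmt_4_general S
end

section
/- Let M be a left cancellative monoid of finite right geometric type, finitely generated by S, acting on itself by left translation with word semimetric d_S. Then the action is outward proper: for every finite-radius out-ball B ⊆ M, the set { m ∈ M | d_S(B, mB) = 0 } is finite, where d_S(A,B) = inf{ d_S(a,b) | a∈A, b∈B }. -/
open scoped ENNReal NNReal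

/-!
A finite-radius out-ball `B` is finite, since it is covered by the words of bounded length over the
finite alphabet `S`. As word distances are natural numbers or `∞`, `d_S(B, mB) = 0` forces
`a = m * b` for some `a b ∈ B`, so `m` lies in the finite union over `a b ∈ B` of the sets
`{m | m * b = a}`, each finite by finite right geometric type.
-/

section WordDist

variable {M : Type*} [Monoid M] {S : Set M}

lemma exists_word_of_wordDist_lt {x y : M} {n : ℝ≥0∞} (h : wordDist S x y < n) :
    ∃ w : List M, (∀ s ∈ w, s ∈ S) ∧ x * w.prod = y ∧ (w.length : ℝ≥0∞) < n := by
  obtain ⟨_, ⟨w, hwS, hw, rfl⟩, hlt⟩ := sInf_lt_iff.mp h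
  exact ⟨w, hwS, hw, hlt⟩

lemma eq_of_wordDist_lt_one {x y : M} (h : wordDist S x y < 1) : x = y := by
  obtain ⟨w, -, hw, hlen⟩ := exists_word_of_wordDist_lt h
  have hnil : w = [] := List.length_eq_zero_iff.mp (Nat.lt_one_iff.mp (by exact_mod_cast hlen))
  simpa [hnil] using hw

lemma finite_setOf_wordDist_lt_natCast (hS : S.Finite) (x : M) (N : ℕ) :
    {y | wordDist S x y < N}.Finite := by
  have : Finite S := hS
  refine ((List.finite_length_lt S N).image fun w => x * (w.map Subtype.val).prod).subset ?_
  intro y hy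
  obtain ⟨w, hwS, rfl, hlen⟩ := exists_word_of_wordDist_lt hy
  lift w to List S using hwS
  exact ⟨w, by simpa using hlen, rfl⟩

lemma finite_setOf_wordDist_le (hS : S.Finite) (x : M) {r : ℝ≥0∞} (hr : r ≠ ∞) :
    {y | wordDist S x y ≤ r}.Finite := by
  obtain ⟨N, hN⟩ := ENNReal.exists_nat_gt hr
  exact (finite_setOf_wordDist_lt_natCast hS x N).subset fun y hy => lt_of_le_of_lt hy hN

end WordDist

lemma Set.inter_nonempty_of_setDist_eq_zero {X : Type*} {d : X → X → ℝ≥0∞}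
    (hd : ∀ a b, d a b < 1 → a = b) {A B : Set X} (h : setDist d A B = 0) :
    (A ∩ B).Nonempty := by
  have hlt : setDist d A B < 1 := h ▸ zero_lt_one
  simp only [setDist, iInf_lt_iff] at hlt
  obtain ⟨a, ha, b, hb, hab⟩ := hlt
  exact ⟨a, ha, hd a b hab ▸ hb⟩

lemma Set.Finite.setOf_inter_image_mul_nonempty {M : Type*} [Monoid M]
    (hfgt : ∀ b c : M, {a : M | a * b = c}.Finite) {B : Set M} (hB : B.Finite) :
    {m : M | (B ∩ (fun y => m * y) '' B).Nonempty}.Finite := by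
  refine (hB.biUnion fun c _ => hB.biUnion fun b _ => hfgt b c).subset ?_
  rintro m ⟨c, hc, b, hb, rfl⟩
  exact Set.mem_biUnion hc (Set.mem_biUnion hb rfl)

theorem stmt_8_general {M : Type*} [Monoid M] (S : Set M) (hS : S.Finite)
    (hfgt : ∀ b c : M, {a : M | a * b = c}.Finite)
    (x₀ : M) (r : ℝ≥0∞) (hr : r ≠ ∞) :
    {m : M | setDist (wordDist S) {y | wordDist S x₀ y ≤ r}
      ((fun y => m * y) '' {y | wordDist S x₀ y ≤ r}) = 0}.Finite :=
  ((finite_setOf_wordDist_le hS x₀ hr).setOf_inter_image_mul_nonempty hfgt).subset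
    fun _ hm => Set.inter_nonempty_of_setDist_eq_zero (fun _ _ => eq_of_wordDist_lt_one) hm

theorem stmt_8 {M : Type*} [Monoid M] (S : Set M) (hS : S.Finite)
    (hgen : Submonoid.closure S = ⊤)
    (hlc : ∀ m x y : M, m * x = m * y → x = y)
    (hfgt : ∀ b c : M, {a : M | a * b = c}.Finite)
    (x₀ : M) (r : ℝ≥0∞) (hr : r ≠ ∞) :
    {m : M | setDist (wordDist S) {y | wordDist S x₀ y ≤ r}
      ((fun y => m * y) '' {y | wordDist S x₀ y ≤ r}) = 0}.Finite :=
  stmt_8_general S hS hfgt x₀ r hr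
end

section
/- Let M be a monoid acting idealistically (at basepoint x₀), outward properly and coboundedly by isometric embeddings on a geodesic semimetric space X. Then M is finitely generated and the map m ↦ m·x₀ is a quasi-isometry from M (with a word semimetric) to X. (Švarc-Milnor Lemma for isometric embeddings.) -/
open scoped ENNReal NNReal

/-!
Pick, by coboundedness and the idealistic condition, an orbit point in the covering ball, so
that every point of `X` lies within a fixed distance `R` (in both directions) of the orbit of
`x₀`. Sample a geodesic from `x₀` to `h • x₀` at unit steps and shadow the samples by orbit
points: consecutive shadows are at distance `≤ 2R + 1`, and the idealistic condition writes
each one as the previous one times an element of the set `T` of elements moving `x₀` by at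
most `2R + 1`. So `h` is a word in `T` of length about `d(x₀, h • x₀)`, while outward
properness makes `T` finite. The reverse inequality is the triangle inequality along a word.
-/

namespace IsSemimetric

variable {X : Type*} {d : X → X → ℝ≥0∞}

theorem dist_self (hd : IsSemimetric d) (x : X) : d x x = 0 := (hd.1 x x).2 rfl

theorem eq_of_dist_eq_zero (hd : IsSemimetric d) {x y : X} (h : d x y = 0) : x = y :=
  (hd.1 x y).1 h

theorem dist_triangle (hd : IsSemimetric d) (x y z : X) : d x z ≤ d x y + d y z := hd.2 x y z

theorem dist_triangle4 (hd : IsSemimetric d) (x y z w : X) :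
    d x w ≤ d x y + d y z + d z w :=
  (hd.dist_triangle x z w).trans (add_le_add_left (hd.dist_triangle x y z) _)

end IsSemimetric

section wordDist

variable {M : Type*} [Monoid M] {S : Set M}

theorem wordDist_le_length {x y : M} {w : List M} (hw : ∀ s ∈ w, s ∈ S) (hxy : x * w.prod = y) :
    wordDist S x y ≤ w.length :=
  sInf_le ⟨w, hw, hxy, rfl⟩

theorem le_wordDist {x y : M} {a : ℝ≥0∞}
    (h : ∀ w : List M, (∀ s ∈ w, s ∈ S) → x * w.prod = y → a ≤ w.length) :
    a ≤ wordDist S x y :=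
  le_sInf fun _ ⟨w, hw, hxy, hn⟩ => hn ▸ h w hw hxy

end wordDist

theorem dist_sample_succ_le_one {X : Type*} {d : X → X → ℝ≥0∞} {p : ℝ → X} {L : ℝ}
    (hp : ∀ a b : ℝ, 0 ≤ a → a ≤ b → b ≤ L → d (p a) (p b) ≤ ENNReal.ofReal (b - a))
    (hL : 0 ≤ L) (i : ℕ) :
    d (p (min (i : ℝ) L)) (p (min ((i + 1 : ℕ) : ℝ) L)) ≤ 1 := by
  have hi : (i : ℝ) ≤ (i + 1 : ℕ) := by push_cast; linarith
  refine (hp _ _ (le_min i.cast_nonneg hL) (min_le_min_right L hi) (min_le_right _ _)).trans ?_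
  refine ENNReal.ofReal_le_one.2 ?_
  rcases le_total (i : ℝ) L with h | h
  · rw [min_eq_left h]; push_cast; linarith [min_le_left ((i : ℝ) + 1) L]
  · rw [min_eq_right h]; linarith [min_le_right ((i + 1 : ℕ) : ℝ) L]

section Action

variable {M X : Type*} [Monoid M] [MulAction M X] {d : X → X → ℝ≥0∞} {x₀ : X}

theorem smul_injective_of_isometric (hd : IsSemimetric d)
    (hiso : ∀ (m : M) (x y : X), d (m • x) (m • y) = d x y) (m : M) :
    Function.Injective (m • · : X → X) := fun x y h =>
  hd.eq_of_dist_eq_zero <| by rw [← hiso m, show m • x = m • y from h, hd.dist_self]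

theorem exists_eq_mul_of_dist_ne_top (hiso : ∀ (m : M) (x y : X), d (m • x) (m • y) = d x y)
    (hideal : ∀ m n : M, d (m • x₀) (n • x₀) ≠ ∞ → ∀ g : M, ∃ h : M, n * g = m * h)
    {m n : M} (hmn : d (m • x₀) (n • x₀) ≠ ∞) :
    ∃ t : M, n = m * t ∧ d x₀ (t • x₀) = d (m • x₀) (n • x₀) := by
  obtain ⟨t, ht⟩ := hideal m n hmn 1
  rw [mul_one] at ht
  exact ⟨t, ht, by rw [ht, mul_smul, hiso]⟩

/-- The covering ball around `x₁` contains an orbit point: if `x₀ = m • b` with `b` in the ball,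
the idealistic condition for the pair `m, 1` gives `m * s = 1`, whence `s • x₀ = b`. -/
theorem exists_dist_smul_le_of_cobounded (hd : IsSemimetric d)
    (hiso : ∀ (m : M) (x y : X), d (m • x) (m • y) = d x y)
    (hcob : ∃ (x₁ : X) (r : ℝ≥0∞), r ≠ ∞ ∧
      ∀ x : X, ∃ (m : M) (b : X), d x₁ b ≤ r ∧ d b x₁ ≤ r ∧ x = m • b)
    (hbase : ∀ y, d x₀ y ≠ ∞)
    (hideal : ∀ m n : M, d (m • x₀) (n • x₀) ≠ ∞ → ∀ g : M, ∃ h : M, n * g = m * h) :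
    ∃ R : ℝ≥0, ∀ x : X, ∃ m : M, d (m • x₀) x ≤ R ∧ d x (m • x₀) ≤ R := by
  obtain ⟨x₁, r, hr, hcov⟩ := hcob
  lift r to ℝ≥0 using hr
  obtain ⟨m₀, b₀, hb₀, hb₀', hx₀⟩ := hcov x₀
  have hfin : d (m₀ • x₀) ((1 : M) • x₀) ≠ ∞ := by
    refine ne_top_of_le_ne_top (b := d x₀ x₁ + r) (by simp [hbase]) ?_
    calc d (m₀ • x₀) ((1 : M) • x₀) = d x₀ b₀ := by rw [one_smul, hx₀, hiso, ← hx₀]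
      _ ≤ d x₀ x₁ + d x₁ b₀ := hd.dist_triangle _ _ _
      _ ≤ d x₀ x₁ + r := add_le_add_right hb₀ _
  obtain ⟨s, hs⟩ := hideal m₀ 1 hfin 1
  have hsx₀ : s • x₀ = b₀ :=
    smul_injective_of_isometric hd hiso m₀ (show m₀ • s • x₀ = m₀ • b₀ by rw [smul_smul, ← hs, one_mul, one_smul, ← hx₀])
  refine ⟨2 * r, fun x => ?_⟩
  obtain ⟨m, b, hb, hb', rfl⟩ := hcov x
  refine ⟨m * s, ?_, ?_⟩
  · calc d ((m * s) • x₀) (m • b) = d b₀ b := by rw [mul_smul, hiso, hsx₀]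
      _ ≤ d b₀ x₁ + d x₁ b := hd.dist_triangle _ _ _
      _ ≤ r + r := add_le_add hb₀' hb
      _ = ((2 * r : ℝ≥0) : ℝ≥0∞) := by push_cast; ring
  · calc d (m • b) ((m * s) • x₀) = d b b₀ := by rw [mul_smul, hiso, hsx₀]
      _ ≤ d b x₁ + d x₁ b₀ := hd.dist_triangle _ _ _
      _ ≤ r + r := add_le_add hb' hb₀
      _ = ((2 * r : ℝ≥0) : ℝ≥0∞) := by push_cast; ring

theorem exists_word_of_chain (hiso : ∀ (m : M) (x y : X), d (m • x) (m • y) = d x y)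
    (hideal : ∀ m n : M, d (m • x₀) (n • x₀) ≠ ∞ → ∀ g : M, ∃ h : M, n * g = m * h)
    {C : ℝ≥0∞} (hC : C ≠ ∞) (a : ℕ → M) (ha : ∀ i, d (a i • x₀) (a (i + 1) • x₀) ≤ C) :
    ∀ N : ℕ, ∃ w : List M, (∀ t ∈ w, d x₀ (t • x₀) ≤ C) ∧ a N = a 0 * w.prod ∧ w.length = N
  | 0 => ⟨[], by simp, by simp, rfl⟩
  | N + 1 => by
    obtain ⟨w, hwC, hwN, hwlen⟩ := exists_word_of_chain hiso hideal hC a ha N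
    obtain ⟨t, ht, htd⟩ := exists_eq_mul_of_dist_ne_top hiso hideal (ne_top_of_le_ne_top hC (ha N))
    refine ⟨w ++ [t], ?_, by rw [ht, hwN, List.prod_append, List.prod_singleton, mul_assoc],
      by simp [hwlen]⟩
    simp only [List.mem_append, List.mem_singleton]
    rintro u (hu | rfl)
    exacts [hwC u hu, htd ▸ ha N]

theorem finite_setOf_dist_smul_le (hd : IsSemimetric d)
    (hprop : ∀ (x₁ : X) (r : ℝ≥0∞), r ≠ ∞ →
      {m : M | setDist d {y | d x₁ y ≤ r} ((fun y => m • y) '' {y | d x₁ y ≤ r}) = 0}.Finite)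
    {C : ℝ≥0∞} (hC : C ≠ ∞) : {t : M | d x₀ (t • x₀) ≤ C}.Finite := by
  refine (hprop x₀ C hC).subset fun t ht => le_antisymm ?_ zero_le
  have hx₀ : x₀ ∈ {y | d x₀ y ≤ C} := by simp [hd.dist_self]
  exact iInf₂_le_of_le (t • x₀) ht <|
    iInf₂_le_of_le (t • x₀) ⟨x₀, hx₀, rfl⟩ (hd.dist_self _).le

theorem dist_smul_prod_le (hd : IsSemimetric d)
    (hiso : ∀ (m : M) (x y : X), d (m • x) (m • y) = d x y) {S : Set M} {C : ℝ≥0∞}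
    (hS : ∀ s ∈ S, d x₀ (s • x₀) ≤ C) :
    ∀ w : List M, (∀ s ∈ w, s ∈ S) → d x₀ (w.prod • x₀) ≤ C * w.length
  | [], _ => by simp [hd.dist_self]
  | u :: w, hw => by
    have ih := dist_smul_prod_le hd hiso hS w fun s hs => hw s (List.mem_cons_of_mem u hs)
    calc d x₀ ((u :: w).prod • x₀) ≤ d x₀ (u • x₀) + d (u • x₀) (u • w.prod • x₀) := by
          rw [List.prod_cons, mul_smul]; exact hd.dist_triangle _ _ _
      _ ≤ C + C * w.length := add_le_add (hS u (hw u List.mem_cons_self)) (by rwa [hiso])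
      _ = C * (u :: w).length := by rw [List.length_cons]; push_cast; ring

theorem dist_smul_le_mul_wordDist (hd : IsSemimetric d)
    (hiso : ∀ (m : M) (x y : X), d (m • x) (m • y) = d x y) {S : Set M} {C : ℝ≥0∞}
    (hC₀ : C ≠ 0) (hC : C ≠ ∞) (hS : ∀ s ∈ S, d x₀ (s • x₀) ≤ C) (m n : M) :
    d (m • x₀) (n • x₀) ≤ C * wordDist S m n := by
  rw [mul_comm, ← ENNReal.div_le_iff hC₀ hC]
  refine le_wordDist fun w hw hmn => ?_
  rw [ENNReal.div_le_iff hC₀ hC, mul_comm, ← hmn, mul_smul, hiso]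
  exact dist_smul_prod_le hd hiso hS w hw

theorem exists_word_length_le (hd : IsSemimetric d)
    (hiso : ∀ (m : M) (x y : X), d (m • x) (m • y) = d x y)
    (hgeo : ∀ x y : X, d x y ≠ ∞ → ∃ p : ℝ → X, p 0 = x ∧ p (d x y).toReal = y ∧
      ∀ a b : ℝ, 0 ≤ a → a ≤ b → b ≤ (d x y).toReal →
        d (p a) (p b) ≤ ENNReal.ofReal (b - a))
    (hbase : ∀ y, d x₀ y ≠ ∞)
    (hideal : ∀ m n : M, d (m • x₀) (n • x₀) ≠ ∞ → ∀ g : M, ∃ h : M, n * g = m * h)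
    {R : ℝ≥0} (hR : ∀ x : X, ∃ m : M, d (m • x₀) x ≤ R ∧ d x (m • x₀) ≤ R) (h : M) :
    ∃ w : List M, (∀ t ∈ w, d x₀ (t • x₀) ≤ 2 * R + 1) ∧ w.prod = h ∧
      (w.length : ℝ≥0∞) ≤ d x₀ (h • x₀) + 2 := by
  obtain ⟨p, hp0, hpL, hp⟩ := hgeo x₀ (h • x₀) (hbase _)
  set L := (d x₀ (h • x₀)).toReal
  have hL : 0 ≤ L := ENNReal.toReal_nonneg
  set N := ⌈L⌉₊
  let y : ℕ → X := fun i => p (min (i : ℝ) L)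
  choose c hc using fun i => hR (y i)
  let a : ℕ → M := fun i => if i = 0 then 1 else if N < i then h else c i
  have ha : ∀ i, d (a i • x₀) (y i) ≤ R ∧ d (y i) (a i • x₀) ≤ R := by
    intro i
    by_cases hi0 : i = 0
    · simp [a, y, hi0, hL, hp0, hd.dist_self]
    by_cases hiN : N < i
    · have hyi : y i = h • x₀ := by
        simp only [y]
        rw [min_eq_right ((Nat.le_ceil L).trans (by exact_mod_cast hiN.le)), hpL]
      simp [a, hi0, hiN, hyi, hd.dist_self]
    · simpa [a, hi0, hiN] using hc i
  have hstep : ∀ i, d (a i • x₀) (a (i + 1) • x₀) ≤ 2 * R + 1 := fun i =>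
    calc d (a i • x₀) (a (i + 1) • x₀)
        ≤ d (a i • x₀) (y i) + d (y i) (y (i + 1)) + d (y (i + 1)) (a (i + 1) • x₀) :=
          hd.dist_triangle4 _ _ _ _
      _ ≤ R + 1 + R :=
          add_le_add (add_le_add (ha i).1 (dist_sample_succ_le_one hp hL i)) (ha (i + 1)).2
      _ = 2 * R + 1 := by ring
  obtain ⟨w, hwC, hwprod, hwlen⟩ :=
    exists_word_of_chain hiso hideal (by finiteness) a hstep (N + 1)
  refine ⟨w, hwC, by simpa [a] using hwprod.symm, ?_⟩
  have hN : (N : ℝ≥0∞) ≤ d x₀ (h • x₀) + 1 := by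
    rw [← ENNReal.ofReal_toReal (hbase (h • x₀)), ← ENNReal.ofReal_one,
      ← ENNReal.ofReal_add hL zero_le_one, ← ENNReal.ofReal_natCast]
    exact ENNReal.ofReal_le_ofReal (Nat.ceil_lt_add_one hL).le
  calc (w.length : ℝ≥0∞) = N + 1 := by rw [hwlen]; push_cast; rfl
    _ ≤ d x₀ (h • x₀) + 1 + 1 := add_le_add_left hN 1
    _ = d x₀ (h • x₀) + 2 := by rw [add_assoc, one_add_one_eq_two]

end Action

theorem stmt_10 {M X : Type*} [Monoid M] [MulAction M X]
    (d : X → X → ℝ≥0∞) (hd : IsSemimetric d)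
    (hiso : ∀ (m : M) (x y : X), d (m • x) (m • y) = d x y)
    (hgeo : ∀ x y : X, d x y ≠ ∞ → ∃ p : ℝ → X, p 0 = x ∧ p (d x y).toReal = y ∧
      ∀ a b : ℝ, 0 ≤ a → a ≤ b → b ≤ (d x y).toReal →
        d (p a) (p b) ≤ ENNReal.ofReal (b - a))
    (hcob : ∃ (x₁ : X) (r : ℝ≥0∞), r ≠ ∞ ∧
      ∀ x : X, ∃ (m : M) (b : X), d x₁ b ≤ r ∧ d b x₁ ≤ r ∧ x = m • b)
    (hprop : ∀ (x₁ : X) (r : ℝ≥0∞), r ≠ ∞ →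
      {m : M | setDist d {y | d x₁ y ≤ r} ((fun y => m • y) '' {y | d x₁ y ≤ r}) = 0}.Finite)
    (x₀ : X) (hbase : ∀ y, d x₀ y ≠ ∞)
    (hideal : ∀ m n : M, d (m • x₀) (n • x₀) ≠ ∞ → ∀ g : M, ∃ h : M, n * g = m * h) :
    ∃ S : Set M, S.Finite ∧ Submonoid.closure S = ⊤ ∧
      ∃ lam eps mu : ℝ≥0, 1 ≤ lam ∧ 0 < eps ∧ 1 ≤ mu ∧
        (∀ m n : M, wordDist S m n / (lam : ℝ≥0∞) - (eps : ℝ≥0∞) ≤ d (m • x₀) (n • x₀) ∧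
          d (m • x₀) (n • x₀) ≤ (lam : ℝ≥0∞) * wordDist S m n + (eps : ℝ≥0∞)) ∧
        ∀ x : X, ∃ m : M, d (m • x₀) x ≤ (mu : ℝ≥0∞) ∧ d x (m • x₀) ≤ (mu : ℝ≥0∞) := by
  obtain ⟨R, hR⟩ := exists_dist_smul_le_of_cobounded hd hiso hcob hbase hideal
  have hword := exists_word_length_le hd hiso hgeo hbase hideal hR
  set T := {t : M | d x₀ (t • x₀) ≤ 2 * R + 1}
  have hlam : ((2 * R + 1 : ℝ≥0) : ℝ≥0∞) = 2 * R + 1 := by push_cast; rfl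
  refine ⟨T, finite_setOf_dist_smul_le hd hprop (by finiteness), ?_, 2 * R + 1, 2, R + 1, le_add_self,
    two_pos, le_add_self, fun m n => ⟨?_, ?_⟩, fun x => ?_⟩
  · refine eq_top_iff.2 fun h _ => ?_
    obtain ⟨w, hw, rfl, -⟩ := hword h
    exact list_prod_mem fun t ht => Submonoid.subset_closure (hw t ht)
  · rw [tsub_le_iff_right]
    refine (ENNReal.div_le_of_le_mul (le_mul_of_one_le_right' (by simp))).trans ?_
    by_cases hmn : d (m • x₀) (n • x₀) = ∞
    · simp [hmn]
    obtain ⟨t, rfl, ht⟩ := exists_eq_mul_of_dist_ne_top hiso hideal hmn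
    obtain ⟨w, hw, rfl, hlen⟩ := hword t
    calc wordDist T m (m * w.prod) ≤ w.length := wordDist_le_length hw rfl
      _ ≤ _ := by rw [← ht]; exact_mod_cast hlen
  · rw [hlam]
    exact (dist_smul_le_mul_wordDist hd hiso (by simp) (by finiteness) (fun s hs => hs) m n).trans
      le_self_add
  · obtain ⟨m, hm, hm'⟩ := hR x
    exact ⟨m, hm.trans (by simp), hm'.trans (by simp)⟩
end

section
/- A finitely generated monoid M whose word semimetric d_S is quasi-metric (i.e., there exist λ,μ < ∞ with d_S(x,y) ≤ λd_S(y,x)+μ for all x,y ∈ M) is right simple, i.e., mM = M for all m ∈ M; and a right simple monoid is a group. -/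
open scoped ENNReal NNReal

lemma wordDist_lt_top_iff {M : Type*} [Monoid M] (S : Set M) (x y : M) :
    wordDist S x y < ⊤ ↔ ∃ w : List M, (∀ s ∈ w, s ∈ S) ∧ x * w.prod = y := by
  constructor
  · intro h
    obtain ⟨n, hn, -⟩ := sInf_lt_iff.mp h
    obtain ⟨w, hw, hxy, -⟩ := hn
    exact ⟨w, hw, hxy⟩
  · rintro ⟨w, hw, hxy⟩
    calc wordDist S x y ≤ (w.length : ℝ≥0∞) := sInf_le ⟨w, hw, hxy, rfl⟩
      _ < ⊤ := by simp

theorem stmt_14 {M : Type*} [Monoid M] (S : Set M) (hS : S.Finite)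
    (hgen : Submonoid.closure S = ⊤)
    (hqm : ∃ lam mu : ℝ≥0, ∀ x y : M,
      wordDist S x y ≤ (lam : ℝ≥0∞) * wordDist S y x + (mu : ℝ≥0∞)) :
    (∀ m : M, Set.range (fun x => m * x) = Set.univ) ∧
    ∀ (N : Type*) [Monoid N], (∀ n : N, Set.range (fun x => n * x) = Set.univ) →
      ∀ n : N, ∃ q : N, n * q = 1 ∧ q * n = 1 := by
  constructor
  · intro m
    -- wordDist 1 m < ⊤
    have h1m : wordDist S 1 m < ⊤ := by
      rw [wordDist_lt_top_iff]
      obtain ⟨l, hl, hprod⟩ := Submonoid.exists_list_of_mem_closure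
        (show m ∈ Submonoid.closure S by rw [hgen]; trivial)
      exact ⟨l, hl, by simp [hprod]⟩
    obtain ⟨lam, mu, hqm⟩ := hqm
    have hm1 : wordDist S m 1 < ⊤ :=
      lt_of_le_of_lt (hqm m 1) (by
        apply ENNReal.add_lt_top.mpr
        exact ⟨ENNReal.mul_lt_top ENNReal.coe_lt_top h1m, ENNReal.coe_lt_top⟩)
    obtain ⟨w, -, hw⟩ := (wordDist_lt_top_iff S m 1).mp hm1
    ext y
    simp only [Set.mem_range, Set.mem_univ, iff_true]
    exact ⟨w.prod * y, by rw [← mul_assoc, hw, one_mul]⟩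
  · intro N _ hsur n
    have hinv : ∀ a : N, ∃ b : N, a * b = 1 := by
      intro a
      have := hsur a
      have h1 : (1 : N) ∈ Set.range (fun x => a * x) := by rw [this]; trivial
      obtain ⟨b, hb⟩ := h1
      exact ⟨b, hb⟩
    obtain ⟨q, hq⟩ := hinv n
    obtain ⟨r, hr⟩ := hinv q
    have hrn : r = n := by
      calc r = 1 * r := (one_mul r).symm
        _ = n * q * r := by rw [hq]
        _ = n * (q * r) := mul_assoc ..
        _ = n := by rw [hr, mul_one]
    exact ⟨q, hq, by rw [← hrn, hr]⟩
end

section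
/- Let F be a free monoid of rank r with free generators f₁,…,f_r and G a finite group. Let M ⊆ F * G be the set of elements whose normal form g₀x₁g₁⋯xₙgₙ has gₙ equal to the identity of G. Then M is a left unitary submonoid of F * G, and M is a free monoid freely generated by the r|G| elements { g·fᵢ | g ∈ G, 1 ≤ i ≤ r }. -/
namespace Stmt17Aux

open Monoid.Coprod FreeMonoid

@[ext]
structure NF (r : ℕ) (G : Type*) where
  L : List (G × Fin r)
  g : G

namespace NF

variable {r : ℕ} {G : Type*} [Group G]

instance : Mul (NF r G) :=
  ⟨fun a b => match b with
    | ⟨[], g'⟩ => ⟨a.L, a.g * g'⟩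
    | ⟨(h, x) :: rest, g'⟩ => ⟨a.L ++ (a.g * h, x) :: rest, g'⟩⟩

instance : One (NF r G) := ⟨⟨[], 1⟩⟩

lemma mul_nil (a : NF r G) (g' : G) : a * ⟨[], g'⟩ = ⟨a.L, a.g * g'⟩ := rfl

lemma mul_cons (a : NF r G) (h : G) (x : Fin r) (rest : List (G × Fin r)) (g' : G) :
    a * ⟨(h, x) :: rest, g'⟩ = ⟨a.L ++ (a.g * h, x) :: rest, g'⟩ := rfl

instance : Monoid (NF r G) where
  mul_assoc a b c := by
    obtain ⟨Lb, gb⟩ := b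
    obtain ⟨Lc, gc⟩ := c
    cases Lb with
    | nil =>
      cases Lc with
      | nil => simp [mul_nil, mul_assoc]
      | cons p rest =>
        obtain ⟨h, x⟩ := p
        simp [mul_nil, mul_cons, mul_assoc]
    | cons p restb =>
      obtain ⟨h, x⟩ := p
      cases Lc with
      | nil => simp [mul_nil, mul_cons]
      | cons q restc =>
        obtain ⟨h', x'⟩ := q
        simp [mul_nil, mul_cons]
  one_mul a := by
    obtain ⟨L, g⟩ := a
    cases L with
    | nil => show (⟨[], 1⟩ : NF r G) * ⟨[], g⟩ = _; simp [mul_nil]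
    | cons p rest =>
      obtain ⟨h, x⟩ := p
      show (⟨[], 1⟩ : NF r G) * _ = _
      simp [mul_cons]
  mul_one a := by
    show a * ⟨[], 1⟩ = a
    simp [mul_nil]

lemma one_def : (1 : NF r G) = ⟨[], 1⟩ := rfl

lemma mk_one_mul_mk_one (L L' : List (G × Fin r)) :
    (⟨L, 1⟩ : NF r G) * ⟨L', 1⟩ = ⟨L ++ L', 1⟩ := by
  cases L' with
  | nil => simp [mul_nil]
  | cons p rest => obtain ⟨h, x⟩ := p; simp [mul_cons]

lemma g_eq_one_of_mul {a b : NF r G} (ha : a.g = 1) (hab : (a * b).g = 1) : b.g = 1 := by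
  obtain ⟨L', g'⟩ := b
  cases L' with
  | nil => rw [mul_nil] at hab; simpa [ha] using hab
  | cons p rest => obtain ⟨h, x⟩ := p; rw [mul_cons] at hab; exact hab

end NF

variable (r : ℕ) (G : Type*) [Group G]

abbrev C := Monoid.Coprod (FreeMonoid (Fin r)) G

/-- The generator map. -/
def fn (p : G × Fin r) : C r G :=
  Monoid.Coprod.inr p.1 * Monoid.Coprod.inl (M := FreeMonoid (Fin r)) (FreeMonoid.of p.2)

def enc (L : List (G × Fin r)) : C r G := (L.map (fn r G)).prod

def φG : G →* NF r G where
  toFun g := ⟨[], g⟩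
  map_one' := rfl
  map_mul' a b := by rw [NF.mul_nil]

def φF : FreeMonoid (Fin r) →* NF r G := FreeMonoid.lift (fun x => ⟨[(1, x)], 1⟩)

def Φ : C r G →* NF r G := Monoid.Coprod.lift (φF r G) (φG r G)

lemma enc_append (L L' : List (G × Fin r)) :
    enc r G (L ++ L') = enc r G L * enc r G L' := by
  simp [enc]

lemma inr_mul_enc_cons (g h : G) (x : Fin r) (rest : List (G × Fin r)) :
    Monoid.Coprod.inr g * enc r G ((h, x) :: rest) = enc r G ((g * h, x) :: rest) := by
  simp only [enc, List.map_cons, List.prod_cons, fn, ← mul_assoc, ← map_mul]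

def Ψ : NF r G →* C r G where
  toFun a := enc r G a.L * Monoid.Coprod.inr a.g
  map_one' := by simp [NF.one_def, enc]
  map_mul' a b := by
    obtain ⟨L', g'⟩ := b
    cases L' with
    | nil =>
      rw [NF.mul_nil]
      simp [enc, mul_assoc]
    | cons p rest =>
      obtain ⟨h, x⟩ := p
      rw [NF.mul_cons]
      show enc r G (a.L ++ (a.g * h, x) :: rest) * _ = _
      rw [enc_append, ← inr_mul_enc_cons, mul_assoc, mul_assoc, mul_assoc]

lemma Φ_enc (L : List (G × Fin r)) : Φ r G (enc r G L) = ⟨L, 1⟩ := by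
  induction L with
  | nil => simp [enc, NF.one_def]
  | cons p rest ih =>
    obtain ⟨h, x⟩ := p
    have : enc r G ((h, x) :: rest) = fn r G (h, x) * enc r G rest := by
      simp [enc]
    rw [this, map_mul, ih]
    have h1 : Φ r G (fn r G (h, x)) = ⟨[(h, x)], 1⟩ := by
      simp only [fn, map_mul, Φ, Monoid.Coprod.lift_apply_inl, Monoid.Coprod.lift_apply_inr]
      show φG r G h * φF r G (FreeMonoid.of x) = _
      rw [show (φG r G h) = (⟨[], h⟩ : NF r G) from rfl,
        show φF r G (FreeMonoid.of x) = ⟨[(1, x)], 1⟩ from rfl, NF.mul_cons]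
      simp
    rw [h1, NF.mk_one_mul_mk_one]
    rfl

lemma ΨΦ (x : C r G) : Ψ r G (Φ r G x) = x := by
  have : (Ψ r G).comp (Φ r G) = MonoidHom.id _ := by
    apply Monoid.Coprod.hom_ext
    · apply FreeMonoid.hom_eq
      intro y
      show Ψ r G (Φ r G (Monoid.Coprod.inl (FreeMonoid.of y))) = _
      rw [show Φ r G (Monoid.Coprod.inl (FreeMonoid.of y)) = ⟨[(1, y)], 1⟩ from rfl]
      show enc r G [(1, y)] * Monoid.Coprod.inr 1 = _
      simp [enc, fn]
    · ext g
      show Ψ r G (Φ r G (Monoid.Coprod.inr g)) = _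
      rw [show Φ r G (Monoid.Coprod.inr g) = (⟨[], g⟩ : NF r G) from rfl]
      show enc r G [] * Monoid.Coprod.inr g = _
      simp [enc]
  exact DFunLike.congr_fun this x

lemma mem_range_enc_iff (x : C r G) :
    x ∈ Set.range (enc r G) ↔ (Φ r G x).g = 1 := by
  constructor
  · rintro ⟨L, rfl⟩
    rw [Φ_enc]
  · intro h
    refine ⟨(Φ r G x).L, ?_⟩
    have h2 : Ψ r G (Φ r G x) = enc r G (Φ r G x).L := by
      show enc r G (Φ r G x).L * Monoid.Coprod.inr (Φ r G x).g = _
      rw [h]; simp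
    exact h2.symm.trans (ΨΦ r G x)

end Stmt17Aux

open scoped ENNReal NNReal

theorem stmt_17 (r : ℕ) (G : Type*) [Group G] [Finite G]
    (M : Set (Monoid.Coprod (FreeMonoid (Fin r)) G))
    (hM : M = Set.range (fun L : List (G × Fin r) =>
      (L.map (fun p => Monoid.Coprod.inr p.1 *
        Monoid.Coprod.inl (M := FreeMonoid (Fin r)) (FreeMonoid.of p.2))).prod)) :
    (1 ∈ M) ∧ (∀ a b, a ∈ M → b ∈ M → a * b ∈ M) ∧
    (∀ s t, s ∈ M → s * t ∈ M → t ∈ M) ∧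
    Function.Injective (FreeMonoid.lift (fun p : G × Fin r =>
      Monoid.Coprod.inr p.1 *
        Monoid.Coprod.inl (M := FreeMonoid (Fin r)) (FreeMonoid.of p.2))) ∧
    Set.range (FreeMonoid.lift (fun p : G × Fin r =>
      Monoid.Coprod.inr p.1 *
        Monoid.Coprod.inl (M := FreeMonoid (Fin r)) (FreeMonoid.of p.2))) = M := by
  open Stmt17Aux in
  have hMe : M = Set.range (Stmt17Aux.enc r G) := hM
  have key : ∀ w, FreeMonoid.lift (fun p : G × Fin r =>
      Monoid.Coprod.inr p.1 *
        Monoid.Coprod.inl (M := FreeMonoid (Fin r)) (FreeMonoid.of p.2)) w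
      = Stmt17Aux.enc r G w.toList := fun w =>
    FreeMonoid.lift_apply _ w
  refine ⟨?_, ?_, ?_, ?_, ?_⟩
  · rw [hMe]
    exact ⟨[], rfl⟩
  · rw [hMe]
    rintro a b ⟨La, rfl⟩ ⟨Lb, rfl⟩
    exact ⟨La ++ Lb, Stmt17Aux.enc_append r G La Lb⟩
  · rw [hMe]
    intro s t hs hst
    rw [Stmt17Aux.mem_range_enc_iff] at hs hst ⊢
    rw [map_mul] at hst
    exact Stmt17Aux.NF.g_eq_one_of_mul hs hst
  · intro a b hab
    have h1 := congrArg (Stmt17Aux.Φ r G) ((key a).symm.trans (hab.trans (key b)))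
    rw [Stmt17Aux.Φ_enc, Stmt17Aux.Φ_enc] at h1
    exact congrArg Stmt17Aux.NF.L h1
  · rw [hMe]
    ext x
    constructor
    · rintro ⟨w, rfl⟩
      exact ⟨w.toList, (key w).symm⟩
    · rintro ⟨L, rfl⟩
      exact ⟨FreeMonoid.ofList L, (key _).trans rfl⟩
end
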